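/- arXiv:2309.13634 — 3 statements merged into one kernel-verified Lean document; each statement's English description precedes it below -/
import Mathlib

section
/- A set system 𝒞 on a finite set X is a k-weak hierarchy if and only if for every nonempty subset A ⊆ X there exists a subset U ⊆ A with |U| ≤ k such that cl(A) = cl(U), where cl is the closure function of 𝒞. -/
/-- Closure function of a set system: intersection of all members containing `A`
(empty intersection yields the full set). -/
def SetSys.cl {X : Type*} (𝒞 : Set (Set X)) (A : Set X) : Set X :=
  ⋂₀ {C | C ∈ 𝒞 ∧ A ⊆ C}

/-- `𝒞` is a `k`-weak hierarchy: for any `k+1` members, one of them can be dropped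
without changing the total intersection. -/
def SetSys.kWeak {X : Type*} (𝒞 : Set (Set X)) (k : ℕ) : Prop :=
  ∀ A : Fin (k + 1) → Set X, (∀ i, A i ∈ 𝒞) →
    ∃ j, (⋂ i, A i) = ⋂ i ∈ Finset.univ.erase j, A i

/-!
A family of points `x₀, …, x_k` is *separated* by `𝒞` if each `x_j` is cut off from the
others by a member of `𝒞`. Being a `k`-weak hierarchy means exactly that no `k + 1` points are
separated: the sets cutting off the points are `k + 1` members none of which can be dropped
from their intersection, and conversely. A subset of `A` of least size with the closure of `A`
is irredundant, so any of its points are separated and it has at most `k` elements. Conversely,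
`k + 1` separated points span a set no proper subset of which has the same closure.
-/

theorem Set.iInter_eq_iInter_erase_iff {α ι : Type*} [Fintype ι] [DecidableEq ι]
    (A : ι → Set α) (j : ι) :
    (⋂ i, A i) = ⋂ i ∈ Finset.univ.erase j, A i ↔ ⋂ i ∈ Finset.univ.erase j, A i ⊆ A j := by
  refine ⟨fun h => h ▸ Set.iInter_subset A j, fun h => ?_⟩
  refine (Set.subset_iInter₂ fun i _ => Set.iInter_subset A i).antisymm fun x hx => ?_
  refine Set.mem_iInter.2 fun i => ?_
  by_cases hij : i = j
  · exact hij ▸ h hx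
  · exact Set.mem_iInter₂.1 hx i (Finset.mem_erase.2 ⟨hij, Finset.mem_univ i⟩)

namespace SetSys

variable {X : Type*} {𝒞 : Set (Set X)}

theorem mem_cl_iff {A : Set X} {x : X} : x ∈ cl 𝒞 A ↔ ∀ C ∈ 𝒞, A ⊆ C → x ∈ C := by
  simp [cl]

theorem subset_cl (A : Set X) : A ⊆ cl 𝒞 A :=
  fun _ ha => mem_cl_iff.2 fun _ _ hAC => hAC ha

theorem cl_mono {A B : Set X} (h : A ⊆ B) : cl 𝒞 A ⊆ cl 𝒞 B :=
  fun _ hx => mem_cl_iff.2 fun C hC hBC => mem_cl_iff.1 hx C hC (h.trans hBC)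

theorem cl_subset_of_mem {A C : Set X} (hC : C ∈ 𝒞) (hAC : A ⊆ C) : cl 𝒞 A ⊆ C :=
  Set.sInter_subset_of_mem ⟨hC, hAC⟩

theorem cl_insert_of_mem_cl {A : Set X} {a : X} (ha : a ∈ cl 𝒞 A) :
    cl 𝒞 (insert a A) = cl 𝒞 A := by
  refine (cl_mono (Set.subset_insert a A)).antisymm' fun x hx => mem_cl_iff.2 fun C hC hAC => ?_
  exact mem_cl_iff.1 hx C hC (Set.insert_subset (mem_cl_iff.1 ha C hC hAC) hAC)

theorem exists_subset_cl_eq_irredundant {A : Set X} (hA : A.Finite) :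
    ∃ U ⊆ A, cl 𝒞 U = cl 𝒞 A ∧ ∀ u ∈ U, cl 𝒞 (U \ {u}) ≠ cl 𝒞 U := by
  obtain ⟨U, ⟨hUA, hcl⟩, hmin⟩ := Set.exists_min_image {U | U ⊆ A ∧ cl 𝒞 U = cl 𝒞 A} Set.ncard
    (hA.finite_subsets.subset fun _ hU => hU.1) ⟨A, subset_rfl, rfl⟩
  refine ⟨U, hUA, hcl, fun u hu hdiff => ?_⟩
  have hsmaller := Set.ncard_sdiff_singleton_lt_of_mem hu (hA.subset hUA)
  exact hsmaller.not_ge (hmin _ ⟨Set.sdiff_subset.trans hUA, hdiff.trans hcl⟩)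

def Separates (𝒞 : Set (Set X)) {ι : Type*} (x : ι → X) : Prop :=
  ∀ j, ∃ C ∈ 𝒞, ∀ i, x i ∈ C ↔ i ≠ j

theorem Separates.injective {ι : Type*} {x : ι → X} (hx : Separates 𝒞 x) :
    Function.Injective x := by
  intro i j hij
  obtain ⟨C, -, hC⟩ := hx j
  by_contra hne
  exact (hC j).1 (hij ▸ (hC i).2 hne) rfl

theorem separates_of_irredundant {U : Set X} (hU : ∀ u ∈ U, cl 𝒞 (U \ {u}) ≠ cl 𝒞 U)
    {ι : Type*} {x : ι → X} (hinj : Function.Injective x) (hxU : ∀ i, x i ∈ U) :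
    Separates 𝒞 x := by
  intro j
  have hnot_mem : x j ∉ cl 𝒞 (U \ {x j}) := fun h =>
    hU (x j) (hxU j) (by rw [← cl_insert_of_mem_cl h, Set.insert_sdiff_singleton,
      Set.insert_eq_of_mem (hxU j)])
  obtain ⟨C, hC, hUC, hjC⟩ : ∃ C ∈ 𝒞, U \ {x j} ⊆ C ∧ x j ∉ C := by
    simpa [mem_cl_iff] using hnot_mem
  refine ⟨C, hC, fun i => ⟨fun hi hij => hjC (hij ▸ hi), fun hij => hUC ⟨hxU i, ?_⟩⟩⟩
  exact hinj.ne hij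

theorem Separates.eq_of_cl_eq {ι : Type*} {x : ι → X} (hx : Separates 𝒞 x) {U : Set X}
    (hU : U ⊆ Set.range x) (hcl : cl 𝒞 (Set.range x) = cl 𝒞 U) : U = Set.range x := by
  refine hU.antisymm ?_
  rintro _ ⟨j, rfl⟩
  by_contra hjU
  obtain ⟨C, hC, hxC⟩ := hx j
  have hUC : U ⊆ C := by
    rintro _ hu
    obtain ⟨i, rfl⟩ := hU hu
    exact (hxC i).2 fun hij => hjU (hij ▸ hu)
  have hj : x j ∈ cl 𝒞 U := hcl ▸ subset_cl _ (Set.mem_range_self j)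
  exact (hxC j).1 (cl_subset_of_mem hC hUC hj) rfl

theorem kWeak_iff_forall_not_separates {k : ℕ} :
    kWeak 𝒞 k ↔ ∀ x : Fin (k + 1) → X, ¬ Separates 𝒞 x := by
  simp only [kWeak, Set.iInter_eq_iInter_erase_iff]
  constructor
  · intro h x hx
    choose C hC hxC using hx
    obtain ⟨j, hj⟩ := h C hC
    have hxj : x j ∈ ⋂ i ∈ Finset.univ.erase j, C i :=
      Set.mem_iInter₂.2 fun i hi => (hxC i j).2 (Finset.ne_of_mem_erase hi).symm
    exact (hxC j j).1 (hj hxj) rfl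
  · intro h A hA
    by_contra! hne
    choose x hx hxA using fun j => Set.not_subset.1 (hne j)
    refine h x fun j => ⟨A j, hA j, fun i => ⟨fun hi hij => hxA i (hij ▸ hi), fun hij => ?_⟩⟩
    exact Set.mem_iInter₂.1 (hx i) j (Finset.mem_erase.2 ⟨Ne.symm hij, Finset.mem_univ j⟩)

theorem exists_injective_fin_of_lt_ncard {U : Set X} (hU : U.Finite) {k : ℕ}
    (hk : k < U.ncard) : ∃ x : Fin (k + 1) → X, Function.Injective x ∧ ∀ i, x i ∈ U := by
  have := hU.fintype
  rw [← Nat.card_coe_set_eq, Nat.card_eq_fintype_card] at hk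
  obtain ⟨f⟩ := Function.Embedding.nonempty_of_card_le (α := Fin (k + 1)) (β := U)
    (by rw [Fintype.card_fin]; exact hk)
  exact ⟨fun i => f i, Subtype.val_injective.comp f.injective, fun i => (f i).2⟩

end SetSys

/-- A set system `𝒞` on a finite set `X` is a `k`-weak hierarchy iff for every nonempty
`A ⊆ X` there is `U ⊆ A` with `|U| ≤ k` and `cl(A) = cl(U)`. -/
theorem stmt0 {X : Type*} [Fintype X] (𝒞 : Set (Set X)) (k : ℕ) :
    SetSys.kWeak 𝒞 k ↔
      ∀ A : Set X, A.Nonempty →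
        ∃ U ⊆ A, U.ncard ≤ k ∧ SetSys.cl 𝒞 A = SetSys.cl 𝒞 U := by
  rw [SetSys.kWeak_iff_forall_not_separates]
  constructor
  · intro h A _
    obtain ⟨U, hUA, hcl, hirr⟩ := SetSys.exists_subset_cl_eq_irredundant (𝒞 := 𝒞) A.toFinite
    refine ⟨U, hUA, not_lt.1 fun hk => ?_, hcl.symm⟩
    obtain ⟨x, hinj, hxU⟩ := SetSys.exists_injective_fin_of_lt_ncard U.toFinite hk
    exact h x (SetSys.separates_of_irredundant hirr hinj hxU)
  · intro h x hx
    obtain ⟨U, hU, hUk, hcl⟩ := h (Set.range x) (Set.range_nonempty x)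
    have hcard := Set.ncard_range_of_injective hx.injective
    rw [← hx.eq_of_cl_eq hU hcl] at hcard
    rw [Nat.card_fin] at hcard
    omega
end

section
/- If a DAG G has the lca-property (every nonempty subset A of the leaf set X has a unique least common ancestor), then its clustering system 𝒞_G = {𝒞(v) : v ∈ V(G)} is closed under pairwise intersection: for all u, v ∈ V(G) with 𝒞(u) ∩ 𝒞(v) ≠ ∅, there is w ∈ V(G) with 𝒞(w) = 𝒞(u) ∩ 𝒞(v). -/
namespace Dag

variable {V : Type*}

/-- Reachability order of a digraph: `v ⪯ w` iff there is a directed path from `w` to `v`. -/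
def reach (adj : V → V → Prop) (v w : V) : Prop :=
  Relation.ReflTransGen (fun a b => adj b a) v w

/-- The digraph is acyclic: its reachability relation is antisymmetric. -/
def acyclic (adj : V → V → Prop) : Prop :=
  ∀ v w, reach adj v w → reach adj w v → v = w

/-- A leaf is a `⪯`-minimal vertex. -/
def leaf (adj : V → V → Prop) (x : V) : Prop :=
  ∀ v, reach adj v x → v = x

/-- The set of leaves of the digraph. -/
def leaves (adj : V → V → Prop) : Set V := {x | leaf adj x}

/-- The cluster of `v`: all leaves that are descendants of `v`. -/
def cluster (adj : V → V → Prop) (v : V) : Set V :=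
  {x | leaf adj x ∧ reach adj x v}

/-- The clustering system of the digraph. -/
def clusters (adj : V → V → Prop) : Set (Set V) := {C | ∃ v, C = cluster adj v}

/-- `w` is a least common ancestor of `A`: a `⪯`-minimal common ancestor of `A`. -/
def isLCA (adj : V → V → Prop) (A : Set V) (w : V) : Prop :=
  (∀ a ∈ A, reach adj a w) ∧ ∀ u, (∀ a ∈ A, reach adj a u) → reach adj u w → u = w

/-- `A` has a unique least common ancestor. -/
def hasUniqueLCA (adj : V → V → Prop) (A : Set V) : Prop := ∃! w, isLCA adj A w

end Dag


/-! The unique LCA `w` of `𝒞(u) ∩ 𝒞(v)` lies below every common ancestor of that set: descending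
from a common ancestor to a `⪯`-minimal one (possible by finiteness) produces an LCA, which must be
`w`. Hence `w ⪯ u` and `w ⪯ v`, so `𝒞(w) ⊆ 𝒞(u) ∩ 𝒞(v)`, and the reverse inclusion holds because
`w` is a common ancestor. -/

namespace Dag

variable {V : Type*} {adj : V → V → Prop}

theorem cluster_mono {v w : V} (h : reach adj v w) : cluster adj v ⊆ cluster adj w :=
  fun _ hx => ⟨hx.1, hx.2.trans h⟩

theorem wellFounded_reach_of_ne [Finite V] (hacy : acyclic adj) :
    WellFounded fun a b : V => reach adj a b ∧ a ≠ b := by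
  have : IsTrans V fun a b => reach adj a b ∧ a ≠ b :=
    ⟨fun a b c ⟨hab, hne⟩ ⟨hbc, _⟩ =>
      ⟨hab.trans hbc, fun hac => hne (hacy a b hab (hac ▸ hbc))⟩⟩
  have : Std.Irrefl fun a b : V => reach adj a b ∧ a ≠ b := ⟨fun _ h => h.2 rfl⟩
  exact Finite.wellFounded_of_trans_of_irrefl _

theorem exists_isLCA_reach [Finite V] (hacy : acyclic adj) {A : Set V} {t : V}
    (ht : ∀ a ∈ A, reach adj a t) : ∃ m, isLCA adj A m ∧ reach adj m t := by
  obtain ⟨m, ⟨hmA, hmt⟩, hmin⟩ :=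
    (wellFounded_reach_of_ne hacy).has_min {x | (∀ a ∈ A, reach adj a x) ∧ reach adj x t}
      ⟨t, ht, .refl⟩
  refine ⟨m, ⟨hmA, fun x hxA hxm => ?_⟩, hmt⟩
  by_contra hxm'
  exact hmin x ⟨hxA, hxm.trans hmt⟩ ⟨hxm, hxm'⟩

theorem reach_of_forall_isLCA_eq [Finite V] (hacy : acyclic adj) {A : Set V} {w t : V}
    (huniq : ∀ m, isLCA adj A m → m = w) (ht : ∀ a ∈ A, reach adj a t) : reach adj w t := by
  obtain ⟨m, hm, hmt⟩ := exists_isLCA_reach hacy ht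
  exact huniq m hm ▸ hmt

end Dag

/-- If a DAG has the lca-property, then its clustering system is closed under
pairwise nonempty intersection. -/
theorem stmt4 {V : Type*} [Fintype V] (adj : V → V → Prop) (hacy : Dag.acyclic adj)
    (hlca : ∀ A : Set V, A ⊆ Dag.leaves adj → A.Nonempty → Dag.hasUniqueLCA adj A) :
    ∀ u v : V, (Dag.cluster adj u ∩ Dag.cluster adj v).Nonempty →
      ∃ w : V, Dag.cluster adj w = Dag.cluster adj u ∩ Dag.cluster adj v := by
  intro u v hne
  obtain ⟨w, hw, huniq⟩ := hlca _ (fun a ha => ha.1.1) hne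
  have hwu := Dag.reach_of_forall_isLCA_eq hacy huniq fun a ha => ha.1.2
  have hwv := Dag.reach_of_forall_isLCA_eq hacy huniq fun a ha => ha.2.2
  refine ⟨w, subset_antisymm ?_ fun a ha => ⟨ha.1.1, hw.1 a ha⟩⟩
  exact Set.subset_inter (Dag.cluster_mono hwu) (Dag.cluster_mono hwv)
end

section
/- Let 𝒞 be a pre-k-ary clustering system on X. Then there exists a DAG G (namely the Hasse diagram of 𝒞) with 𝒞_G = 𝒞 that has the k-lca-property. -/
namespace Dag

section Hasse

variable (α : Type*) [PartialOrder α]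

def hasse : α → α → Prop := fun a b => b ⋖ a

variable {α} [LocallyFiniteOrder α]

theorem reach_hasse_iff {a b : α} : reach (hasse α) a b ↔ a ≤ b :=
  le_iff_reflTransGen_covBy.symm

theorem acyclic_hasse : acyclic (hasse α) := fun _ _ hab hba =>
  le_antisymm (reach_hasse_iff.1 hab) (reach_hasse_iff.1 hba)

theorem leaf_hasse_iff {x : α} : leaf (hasse α) x ↔ IsMin x := by
  simp only [leaf, reach_hasse_iff, isMin_iff_forall_not_lt, lt_iff_le_and_ne]
  grind

theorem cluster_hasse (v : α) : cluster (hasse α) v = {x | IsMin x ∧ x ≤ v} := by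
  ext x
  simp only [cluster, leaf_hasse_iff, reach_hasse_iff, Set.mem_ofPred_eq]

theorem isLCA_hasse_iff {A : Set α} {w : α} :
    isLCA (hasse α) A w ↔ Minimal (· ∈ upperBounds A) w := by
  simp only [isLCA, reach_hasse_iff, Minimal, upperBounds, Set.mem_ofPred_eq]
  refine and_congr_right fun _ => forall_congr' fun u => imp_congr_right fun _ => ?_
  exact ⟨fun h huw => (h huw).ge, fun h huw => le_antisymm huw (h huw)⟩

theorem hasUniqueLCA_hasse_of_isLeast {A : Set α} {w : α} (h : IsLeast (upperBounds A) w) :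
    hasUniqueLCA (hasse α) A :=
  ⟨w, isLCA_hasse_iff.2 h.minimal, fun _ hu => h.minimal_iff.1 (isLCA_hasse_iff.1 hu)⟩

end Hasse

end Dag

section ClusteringSystem

variable {X : Type*} {𝒞 : Set (Set X)} (hsing : ∀ x : X, {x} ∈ 𝒞)

def singletonCluster (x : X) : 𝒞 := ⟨{x}, hsing x⟩

theorem singletonCluster_le_iff {x : X} {C : 𝒞} : singletonCluster hsing x ≤ C ↔ x ∈ C.1 :=
  Set.singleton_subset_iff

theorem isLeast_sInter_upperBounds {A : Set X} (hA : ⋂₀ {C | C ∈ 𝒞 ∧ A ⊆ C} ∈ 𝒞) :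
    IsLeast (upperBounds (singletonCluster hsing '' A)) ⟨_, hA⟩ := by
  have upperBounds_iff {C : 𝒞} : C ∈ upperBounds (singletonCluster hsing '' A) ↔ A ⊆ C.1 := by
    simp only [mem_upperBounds, Set.forall_mem_image, singletonCluster_le_iff hsing]
    rfl
  exact ⟨upperBounds_iff.2 fun _ hx _ hC => hC.2 hx,
    fun C hC => Set.sInter_subset_of_mem ⟨C.2, upperBounds_iff.1 hC⟩⟩

variable (hne : ∀ C ∈ 𝒞, C.Nonempty)
include hne

theorem isMin_singletonCluster (x : X) : IsMin (singletonCluster hsing x) := fun C hC =>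
  ((hne C C.2).subset_singleton_iff.1 hC).ge

theorem exists_singletonCluster_eq_of_isMin {C : 𝒞} (hC : IsMin C) :
    ∃ x, singletonCluster hsing x = C := by
  obtain ⟨x, hx⟩ := hne C C.2
  have hxC := (singletonCluster_le_iff hsing).2 hx
  exact ⟨x, le_antisymm hxC (hC hxC)⟩

theorem setOf_isMin_le_eq_image (C : 𝒞) :
    {D : 𝒞 | IsMin D ∧ D ≤ C} = singletonCluster hsing '' C.1 := by
  ext D
  constructor
  · rintro ⟨hD, hDC⟩
    obtain ⟨x, rfl⟩ := exists_singletonCluster_eq_of_isMin hsing hne hD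
    exact ⟨x, (singletonCluster_le_iff hsing).1 hDC, rfl⟩
  · rintro ⟨x, hx, rfl⟩
    exact ⟨isMin_singletonCluster hsing hne x, (singletonCluster_le_iff hsing).2 hx⟩

end ClusteringSystem

theorem stmt19_general {X : Type} [Fintype X] (k : ℕ) (𝒞 : Set (Set X))
    (hne : ∀ C ∈ 𝒞, C.Nonempty) (hsing : ∀ x : X, {x} ∈ 𝒞)
    (hpre : ∀ U : Set X, U.Nonempty → U.ncard ≤ k → (⋂₀ {C | C ∈ 𝒞 ∧ U ⊆ C}) ∈ 𝒞) :
    ∃ (V : Type) (_ : Fintype V) (adj : V → V → Prop) (φ : X → V),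
      Dag.acyclic adj ∧ Function.Injective φ ∧
      (∀ x : X, φ x ∈ Dag.leaves adj) ∧
      (∀ v ∈ Dag.leaves adj, ∃ x : X, φ x = v) ∧
      (∀ v : V, ∃ C ∈ 𝒞, Dag.cluster adj v = φ '' C) ∧
      (∀ C ∈ 𝒞, ∃ v : V, Dag.cluster adj v = φ '' C) ∧
      (∀ A : Set X, A.Nonempty → A.ncard ≤ k → Dag.hasUniqueLCA adj (φ '' A)) := by
  classical
  let : Fintype 𝒞 := Fintype.ofFinite 𝒞
  let : LocallyFiniteOrder 𝒞 := Fintype.toLocallyFiniteOrder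
  have cluster_eq (C : 𝒞) : Dag.cluster (Dag.hasse 𝒞) C = singletonCluster hsing '' C.1 := by
    rw [Dag.cluster_hasse, setOf_isMin_le_eq_image hsing hne]
  refine ⟨𝒞, inferInstance, Dag.hasse 𝒞, singletonCluster hsing, Dag.acyclic_hasse,
    fun x y hxy => Set.singleton_eq_singleton_iff.1 (congrArg Subtype.val hxy),
    fun x => Dag.leaf_hasse_iff.2 (isMin_singletonCluster hsing hne x),
    fun C hC => exists_singletonCluster_eq_of_isMin hsing hne (Dag.leaf_hasse_iff.1 hC),
    fun C => ⟨C.1, C.2, cluster_eq C⟩, fun C hC => ⟨⟨C, hC⟩, cluster_eq ⟨C, hC⟩⟩,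
    fun A hA hk => Dag.hasUniqueLCA_hasse_of_isLeast
      (isLeast_sInter_upperBounds hsing (hpre A hA hk))⟩

/-- Every pre-`k`-ary clustering system `𝒞` is the clustering system of some DAG
(namely its Hasse diagram) with the `k`-lca-property; the leaves of the DAG are
identified with `X` via an injection `φ`. -/
theorem stmt19 {X : Type} [Fintype X] (k : ℕ) (𝒞 : Set (Set X))
    (hne : ∀ C ∈ 𝒞, C.Nonempty) (huniv : Set.univ ∈ 𝒞) (hsing : ∀ x : X, {x} ∈ 𝒞)
    (hpre : ∀ U : Set X, U.Nonempty → U.ncard ≤ k → (⋂₀ {C | C ∈ 𝒞 ∧ U ⊆ C}) ∈ 𝒞) :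
    ∃ (V : Type) (_ : Fintype V) (adj : V → V → Prop) (φ : X → V),
      Dag.acyclic adj ∧ Function.Injective φ ∧
      (∀ x : X, φ x ∈ Dag.leaves adj) ∧
      (∀ v ∈ Dag.leaves adj, ∃ x : X, φ x = v) ∧
      (∀ v : V, ∃ C ∈ 𝒞, Dag.cluster adj v = φ '' C) ∧
      (∀ C ∈ 𝒞, ∃ v : V, Dag.cluster adj v = φ '' C) ∧
      (∀ A : Set X, A.Nonempty → A.ncard ≤ k → Dag.hasUniqueLCA adj (φ '' A)) :=
  stmt19_general k 𝒞 hne hsing hpre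
end
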